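/- arXiv:2605.04442 — 2 statements merged into one kernel-verified Lean document; each statement's English description precedes it below -/
import Mathlib

section
/- Let y : [1/2, 1] → [0, ∞) be a non-decreasing differentiable function, let ε̂ ∈ (0,1), n ≥ 4 an integer, and C₀ > 0. Suppose D ⊂ [1/2,1] is measurable with H¹(D) ≥ 1/4, and for every t ∈ D one has y(t) ≤ C₀·((y'(t))^{1/2} + (y'(t)/|log ε̂|)^{(n-2)/(n-3)}·|log ε̂| + 1). Then there exists η₁ > 0 depending only on C₀ and n such that: if there exists t₀ ∈ [1/2,1] with H¹(D ∩ [1/2, t₀]) ≥ 1/8 and y(t₀) ≤ η₁·|log ε̂|, then y(1/2) ≤ C for some constant C depending only on C₀ and n (one may take C = 64C₀² + C₀). -/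
open MeasureTheory Set Filter
open scoped ENNReal

/-!
Suppose `y (1/2) > 64 C₀² + C₀` and write `v = y - C₀`, `L = |log ε|`, `β = (n-3)/(n-2)`.
On `D` one of the two derivative terms of the inequality dominates `v / (2 C₀)`, which forces
`y' ≥ (v / 2C₀)²` or `y' ≥ L (v / 2C₀L)^β`; in either case `G'(v) y' ≥ 1` for
`G'(v) = 4C₀²/v² + (2C₀)^β L^(β-1) v^(-β)`. Hence the monotone function `G ∘ v` grows at least at
unit rate on `D ∩ [1/2, t₀]`, so it increases by at least `1/8` on `[1/2, t₀]`. But the first part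
of `G` varies by less than `1/16` on `(64 C₀², ∞)`, and the second part stays below `1/16`
as long as `v ≤ η₁ L`.
-/

theorem volume_le_volume_image_of_one_le_deriv {f f' : ℝ → ℝ} {S : Set ℝ}
    (hS : MeasurableSet S) (hf : MonotoneOn f S)
    (hderiv : ∀ t ∈ S, HasDerivWithinAt f (f' t) S t) (hone : ∀ t ∈ S, 1 ≤ f' t) :
    volume S ≤ volume (f '' S) := calc
  volume S = ∫⁻ _ in S, 1 := (setLIntegral_one S).symm
  _ ≤ ∫⁻ t in S, ENNReal.ofReal (f' t) :=
    setLIntegral_mono' hS fun t ht ↦ ENNReal.one_le_ofReal.2 (hone t ht)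
  _ = volume (f '' S) := lintegral_deriv_eq_volume_image_of_monotoneOn hS hderiv hf

section Potential

variable {K L α β v w d : ℝ}

-- The `G` above is `potential (2 * C₀) L β`, and `G'` is `potentialDeriv (2 * C₀) L β`.
noncomputable def potential (K L β v : ℝ) : ℝ :=
  -(K ^ 2 / v) + K ^ β * L ^ (β - 1) / (1 - β) * v ^ (1 - β)

noncomputable def potentialDeriv (K L β v : ℝ) : ℝ :=
  K ^ 2 / v ^ 2 + K ^ β * L ^ (β - 1) * v ^ (-β)

theorem hasDerivAt_potential (hβ : β ≠ 1) (hv : v ≠ 0) :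
    HasDerivAt (potential K L β) (potentialDeriv K L β v) v := by
  have h := ((hasDerivAt_inv hv).const_mul (K ^ 2)).neg.add
    ((Real.hasDerivAt_rpow_const (p := 1 - β) (Or.inl hv)).const_mul
      (K ^ β * L ^ (β - 1) / (1 - β)))
  refine h.congr_deriv ?_ |>.congr_of_eventuallyEq (Eventually.of_forall fun u ↦ ?_)
  · have : 1 - β ≠ 0 := sub_ne_zero.2 hβ.symm
    rw [potentialDeriv, show 1 - β - 1 = -β by ring]
    field_simp
  · simp only [potential, Pi.add_apply, Pi.neg_apply, div_eq_mul_inv]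

theorem monotoneOn_potential (hK : 0 ≤ K) (hL : 0 ≤ L) (hβ : β < 1) :
    MonotoneOn (potential K L β) (Ioi 0) := by
  intro v (hv : 0 < v) w _ hvw
  have hc : 0 ≤ K ^ β * L ^ (β - 1) / (1 - β) := by
    have := Real.rpow_nonneg hK β; have := Real.rpow_nonneg hL (β - 1)
    have : 0 < 1 - β := by linarith
    positivity
  have h1 : K ^ 2 / w ≤ K ^ 2 / v := div_le_div_of_nonneg_left (sq_nonneg K) hv hvw
  have h2 : v ^ (1 - β) ≤ w ^ (1 - β) := Real.rpow_le_rpow hv.le hvw (by linarith)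
  unfold potential
  linarith [mul_le_mul_of_nonneg_left h2 hc]

theorem one_le_sq_div_sq_mul (hv : 0 < v) (hd : 0 ≤ d) (h : v ≤ K * d ^ ((1 : ℝ) / 2)) :
    1 ≤ K ^ 2 / v ^ 2 * d := by
  rw [← Real.sqrt_eq_rpow] at h
  rw [div_mul_eq_mul_div, one_le_div (by positivity)]
  calc v ^ 2 ≤ (K * √d) ^ 2 := pow_le_pow_left₀ hv.le h 2
    _ = K ^ 2 * d := by rw [mul_pow, Real.sq_sqrt hd]

theorem one_le_rpow_mul (hK : 0 < K) (hL : 0 < L) (hβ : 0 < β) (hαβ : α * β = 1)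
    (hv : 0 < v) (hd : 0 ≤ d) (h : v ≤ K * (d / L) ^ α * L) :
    1 ≤ K ^ β * L ^ (β - 1) * v ^ (-β) * d := by
  have h1 : (v / (K * L)) ^ β ≤ d / L := calc
    (v / (K * L)) ^ β ≤ ((d / L) ^ α) ^ β := by
      refine Real.rpow_le_rpow (by positivity) ?_ hβ.le
      rw [div_le_iff₀ (by positivity)]; linarith
    _ = d / L := by rw [← Real.rpow_mul (by positivity), hαβ, Real.rpow_one]
  have h2 : v ^ β ≤ K ^ β * L ^ (β - 1) * d := by
    rw [Real.div_rpow hv.le (by positivity), Real.mul_rpow hK.le hL.le,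
      div_le_div_iff₀ (by positivity) hL] at h1
    rw [Real.rpow_sub_one hL.ne', show K ^ β * (L ^ β / L) * d = d * (K ^ β * L ^ β) / L by ring, le_div_iff₀ hL]
    exact h1
  have hvβ := Real.rpow_pos_of_pos hv β
  rw [Real.rpow_neg hv.le, mul_assoc, mul_comm _ d, ← mul_assoc, ← div_eq_mul_inv,
    one_le_div hvβ]
  exact h2

theorem one_le_potentialDeriv_mul (hK : 0 < K) (hL : 0 < L) (hβ : 0 < β) (hαβ : α * β = 1)
    (hv : K < v) (hd : 0 ≤ d) (h : v ≤ K * (d ^ ((1 : ℝ) / 2) + (d / L) ^ α * L + 1)) :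
    1 ≤ potentialDeriv (2 * K) L β (v - K) * d := by
  have hvK : 0 < v - K := sub_pos.2 hv
  have h₁ : 0 ≤ (2 * K) ^ 2 / (v - K) ^ 2 * d := by positivity
  have h₂ : 0 ≤ (2 * K) ^ β * L ^ (β - 1) * (v - K) ^ (-β) * d := by
    have := Real.rpow_nonneg (by positivity : (0:ℝ) ≤ 2 * K) β
    have := Real.rpow_nonneg hL.le (β - 1)
    have := Real.rpow_nonneg hvK.le (-β)
    positivity
  rw [potentialDeriv, add_mul]
  rcases le_total (v - K) (2 * K * d ^ ((1 : ℝ) / 2)) with hsqrt | hpow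
  · linarith [one_le_sq_div_sq_mul hvK hd hsqrt]
  · have : v - K ≤ 2 * K * (d / L) ^ α * L := by nlinarith
    linarith [one_le_rpow_mul (by positivity) hL hβ hαβ hvK hd this]

-- Chosen so that the second term of `potential K L β` equals `1/16` at `potentialThreshold K β * L`.
noncomputable def potentialThreshold (K β : ℝ) : ℝ :=
  ((1 - β) / (16 * K ^ β)) ^ (1 - β)⁻¹

theorem potentialThreshold_pos (hK : 0 < K) (hβ : β < 1) : 0 < potentialThreshold K β :=
  Real.rpow_pos_of_pos (div_pos (by linarith) (by positivity)) _

theorem potential_sub_lt (hK : 0 < K) (hL : 0 < L) (hβ : β < 1) (hv : 16 * K ^ 2 < v)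
    (hw : 0 < w) (hwη : w ≤ potentialThreshold K β * L) :
    potential K L β w - potential K L β v < 1 / 8 := by
  have h1β : 0 < 1 - β := by linarith
  have hc : 0 < K ^ β * L ^ (β - 1) / (1 - β) := by
    have := Real.rpow_pos_of_pos hL (β - 1)
    positivity
  have hLL : L ^ (β - 1) * L ^ (1 - β) = 1 := by
    rw [← Real.rpow_add hL, sub_add_sub_cancel', sub_self, Real.rpow_zero]
  have hw' : K ^ β * L ^ (β - 1) / (1 - β) * w ^ (1 - β) ≤ 1 / 16 := calc
    _ ≤ K ^ β * L ^ (β - 1) / (1 - β) * (potentialThreshold K β * L) ^ (1 - β) :=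
      mul_le_mul_of_nonneg_left (Real.rpow_le_rpow hw.le hwη h1β.le) hc.le
    _ = 1 / 16 := by
      rw [Real.mul_rpow (potentialThreshold_pos hK hβ).le hL.le, potentialThreshold,
        Real.rpow_inv_rpow (by positivity) h1β.ne']
      field_simp
      linear_combination hLL
  have hv' : K ^ 2 / v < 1 / 16 := by
    rw [div_lt_iff₀ (by nlinarith)]; linarith
  have : 0 ≤ K ^ 2 / w := by positivity
  have : 0 ≤ K ^ β * L ^ (β - 1) / (1 - β) * v ^ (1 - β) :=
    mul_nonneg hc.le (Real.rpow_nonneg (by nlinarith) _)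
  unfold potential
  linarith

end Potential

theorem volume_le_potential_sub {y : ℝ → ℝ} {S : Set ℝ} {a b C₀ L α : ℝ}
    (hC₀ : 0 < C₀) (hL : 0 < L) (hα : 1 < α) (hab : a ≤ b) (hy : MonotoneOn y (Icc a b))
    (hya : 16 * (2 * C₀) ^ 2 < y a - C₀) (hS : MeasurableSet S) (hSab : S ⊆ Icc a b)
    (hyd : ∀ t ∈ S, DifferentiableAt ℝ y t) (hd : ∀ t ∈ S, 0 ≤ deriv y t)
    (hode : ∀ t ∈ S, y t ≤ C₀ * (deriv y t ^ ((1 : ℝ) / 2) + (deriv y t / L) ^ α * L + 1)) :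
    volume S ≤ ENNReal.ofReal (potential (2 * C₀) L α⁻¹ (y b - C₀) -
      potential (2 * C₀) L α⁻¹ (y a - C₀)) := by
  set P := fun t ↦ potential (2 * C₀) L α⁻¹ (y t - C₀)
  have hv : ∀ t ∈ Icc a b, 0 < y t - C₀ := fun t ht ↦ by nlinarith [hy ⟨le_rfl, hab⟩ ht ht.1]
  have hPmono : MonotoneOn P (Icc a b) :=
    (monotoneOn_potential (by positivity) hL.le (inv_lt_one_of_one_lt₀ hα)).comp
      (fun s hs t ht hst ↦ sub_le_sub_right (hy hs ht hst) C₀) hv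
  have hPderiv (t : ℝ) (ht : t ∈ S) :
      HasDerivAt P (potentialDeriv (2 * C₀) L α⁻¹ (y t - C₀) * deriv y t) t :=
    HasDerivAt.comp (h₂ := potential (2 * C₀) L α⁻¹) t
      (hasDerivAt_potential (inv_lt_one_of_one_lt₀ hα).ne (hv t (hSab ht)).ne')
      ((hyd t ht).hasDerivAt.sub_const C₀)
  have hPone (t : ℝ) (ht : t ∈ S) : 1 ≤ potentialDeriv (2 * C₀) L α⁻¹ (y t - C₀) * deriv y t :=
    one_le_potentialDeriv_mul hC₀ hL (inv_pos.2 (by linarith)) (mul_inv_cancel₀ (by linarith))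
      (by linarith [hv t (hSab ht)]) (hd t ht) (hode t ht)
  calc volume S ≤ volume (P '' S) := volume_le_volume_image_of_one_le_deriv hS
        (hPmono.mono hSab) (fun t ht ↦ (hPderiv t ht).hasDerivWithinAt) hPone
    _ ≤ volume (Icc (P a) (P b)) := measure_mono <| image_subset_iff.2 fun t ht ↦
      ⟨hPmono ⟨le_rfl, hab⟩ (hSab ht) (hSab ht).1, hPmono (hSab ht) ⟨hab, le_rfl⟩ (hSab ht).2⟩
    _ = _ := Real.volume_Icc

/-- ODE-type lemma (Lemma `AnODE`). Let `y : [1/2,1] → [0,∞)` be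
non-decreasing and differentiable, `ε̂ ∈ (0,1)`, `n ≥ 4`, `C₀ > 0`, and let
`D ⊆ [1/2,1]` be measurable with `H¹(D) ≥ 1/4` on which the differential
inequality holds.  Then there is `η₁ > 0`, depending only on `C₀` and `n`, such
that the existence of `t₀` with `H¹(D ∩ [1/2,t₀]) ≥ 1/8` and
`y t₀ ≤ η₁ |log ε̂|` forces `y (1/2) ≤ 64 C₀² + C₀`. -/
theorem stmt0 (C₀ : ℝ) (hC₀ : 0 < C₀) (n : ℕ) (hn : 4 ≤ n) :
    ∃ η₁ : ℝ, 0 < η₁ ∧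
      ∀ (y : ℝ → ℝ) (ε : ℝ) (D : Set ℝ),
        0 < ε → ε < 1 →
        (∀ t ∈ Icc (1/2 : ℝ) 1, 0 ≤ y t) →
        MonotoneOn y (Icc (1/2 : ℝ) 1) →
        (∀ t ∈ Icc (1/2 : ℝ) 1, DifferentiableAt ℝ y t) →
        MeasurableSet D → D ⊆ Icc (1/2 : ℝ) 1 →
        (1/4 : ℝ≥0∞) ≤ volume D →
        (∀ t ∈ D, y t ≤ C₀ * ((deriv y t) ^ ((1 : ℝ)/2) +
            (deriv y t / |Real.log ε|) ^ (((n : ℝ) - 2)/((n : ℝ) - 3)) * |Real.log ε| + 1)) →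
        ∀ t₀ ∈ Icc (1/2 : ℝ) 1,
          (1/8 : ℝ≥0∞) ≤ volume (D ∩ Icc (1/2 : ℝ) t₀) →
          y t₀ ≤ η₁ * |Real.log ε| →
          y (1/2) ≤ 64 * C₀ ^ 2 + C₀ := by
  set α : ℝ := ((n : ℝ) - 2) / ((n : ℝ) - 3)
  have hα : 1 < α := by
    have : (4 : ℝ) ≤ n := by exact_mod_cast hn
    rw [one_lt_div (by linarith)]; linarith
  refine ⟨potentialThreshold (2 * C₀) α⁻¹,
    potentialThreshold_pos (by positivity) (inv_lt_one_of_one_lt₀ hα), ?_⟩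
  intro y ε D hε hε1 _ hy hyd hD _ _ hode t₀ ht₀ hvol hyt₀
  by_contra! hy₀
  have hL : 0 < |Real.log ε| := abs_pos.2 (Real.log_neg hε hε1).ne
  have hI : Icc (1/2 : ℝ) t₀ ⊆ Icc (1/2) 1 := Icc_subset_Icc_right ht₀.2
  have hd (t : ℝ) (ht : t ∈ D ∩ Icc (1/2) t₀) : 0 ≤ deriv y t :=
    (hyd t (hI ht.2)).derivWithin (uniqueDiffOn_Icc (by norm_num) t (hI ht.2)) ▸
      hy.derivWithin_nonneg
  have hgrowth := volume_le_potential_sub hC₀ hL hα ht₀.1 (hy.mono hI) (by nlinarith)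
    (hD.inter measurableSet_Icc) inter_subset_right (fun t ht ↦ hyd t (hI ht.2)) hd
    (fun t ht ↦ hode t ht.1)
  have hsmall := potential_sub_lt (w := y t₀ - C₀) (by positivity) hL (inv_lt_one_of_one_lt₀ hα)
    (by nlinarith : 16 * (2 * C₀) ^ 2 < y (1/2) - C₀)
    (by nlinarith [hy ⟨le_rfl, by norm_num⟩ ht₀ ht₀.1]) (by linarith)
  have h8 : ENNReal.ofReal (1/8) = 1/8 := by
    rw [one_div, ENNReal.ofReal_inv_of_pos (by norm_num)]; norm_num
  exact (hvol.trans hgrowth).not_gt (h8 ▸ (ENNReal.ofReal_lt_ofReal_iff (by norm_num)).2 hsmall)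
end

section
/- Let ψ ∈ C¹([0,∞), [0,∞)) satisfy ψ(s) = β s² for s ∈ [0, δ₀) and 0 < ψ(s) ≤ C for s ≥ δ₀, with β, δ₀ > 0. Define G(t) := ∫₀^t ψ(s)^{1/6} ds. Let d ∈ H¹(I) on a 1-dimensional curve I (e.g. an interval or 1-cell of length h) with ∫_I (½|d'|² + ε⁻²ψ(d)) dH¹ ≤ K. Then the Young-inequality bound holds: ∫_I |(G∘d)'|^{3/2} dH¹ ≤ C·ε^{1/2}·K, and consequently by 1-dimensional Sobolev embedding, osc_I G(d) ≤ (C·h^{1/2}·ε^{1/2}·K)^{2/3}, with C depending only on ψ. -/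
/-!
Young's inequality with exponents `4/3` and `4` gives, pointwise,
`ψ(d)^{1/4} |d'|^{3/2} = ε^{1/2} · |d'|^{3/2} (ε⁻² ψ(d))^{1/4} ≤ 2 ε^{1/2} (½|d'|² + ε⁻² ψ(d))`,
and integrating gives the first bound. Since `(G ∘ d)' = ψ(d)^{1/6} d'`, the left-hand side is
`|(G ∘ d)'|^{3/2}`. The chain rule for the absolutely continuous `d` bounds the oscillation of
`G ∘ d` by `∫ |(G ∘ d)'|`, and Hölder's inequality bounds this by `h^{1/3} ‖(G ∘ d)'‖_{3/2}`
(the one-dimensional Sobolev embedding), so the second bound follows from the first.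
-/

open MeasureTheory Set intervalIntegral Filter Topology
open scoped Interval

theorem AbsolutelyContinuousOnInterval.of_dist_le_mul {X Y : Type*} [PseudoMetricSpace X]
    [PseudoMetricSpace Y] {f : ℝ → X} {g : ℝ → Y} {a b K : ℝ}
    (hf : AbsolutelyContinuousOnInterval f a b)
    (hgf : ∀ x ∈ uIcc a b, ∀ y ∈ uIcc a b, dist (g x) (g y) ≤ K * dist (f x) (f y)) :
    AbsolutelyContinuousOnInterval g a b := by
  have hK := Tendsto.const_mul K hf
  rw [mul_zero] at hK
  refine squeeze_zero' (Eventually.of_forall fun E ↦ Finset.sum_nonneg fun _ _ ↦ dist_nonneg) ?_ hK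
  filter_upwards [mem_inf_of_right (mem_principal_self _)] with E hE
  rw [Finset.mul_sum]
  exact Finset.sum_le_sum fun i hi ↦ hgf _ (hE.1 i hi).1 _ (hE.1 i hi).2

theorem LipschitzOnWith.comp_absolutelyContinuousOnInterval {X Y : Type*} [PseudoMetricSpace X]
    [PseudoMetricSpace Y] {g : X → Y} {f : ℝ → X} {K : NNReal} {s : Set X} {a b : ℝ}
    (hg : LipschitzOnWith K g s) (hf : AbsolutelyContinuousOnInterval f a b)
    (hfs : MapsTo f (uIcc a b) s) : AbsolutelyContinuousOnInterval (g ∘ f) a b :=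
  hf.of_dist_le_mul fun _ hx _ hy ↦ hg.dist_le_mul _ (hfs hx) _ (hfs hy)

theorem integral_le_measureReal_rpow_mul_integral_rpow {α : Type*} [MeasurableSpace α]
    {μ : Measure α} [IsFiniteMeasure μ] {f : α → ℝ} {p : ℝ} (hp : 1 < p) (hf0 : 0 ≤ᵐ[μ] f)
    (hfm : AEStronglyMeasurable f μ) (hfp : Integrable (fun x ↦ f x ^ p) μ) :
    ∫ x, f x ∂μ ≤ μ.real univ ^ (1 - p⁻¹) * (∫ x, f x ^ p ∂μ) ^ p⁻¹ := by
  have hpq := Real.HolderConjugate.conjExponent hp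
  have hfLp : MemLp f (ENNReal.ofReal p) μ := by
    rw [← integrable_norm_rpow_iff hfm (ENNReal.ofReal_pos.2 (by linarith)).ne'
      ENNReal.ofReal_ne_top, ENNReal.toReal_ofReal (by linarith)]
    refine hfp.congr ?_
    filter_upwards [hf0] with x hx
    rw [Real.norm_of_nonneg hx]
  have hholder := integral_mul_le_Lp_mul_Lq_of_nonneg hpq hf0 (Eventually.of_forall fun _ ↦
    zero_le_one) hfLp (memLp_const (1 : ℝ))
  simp only [mul_one, Real.one_rpow, MeasureTheory.integral_const, smul_eq_mul] at hholder
  rw [← hpq.inv_add_inv_eq_one, add_sub_cancel_left, mul_comm]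
  simpa [one_div] using hholder

theorem integral_le_rpow_mul_integral_rpow_of_nonneg {f : ℝ → ℝ} {a b p : ℝ} (hp : 1 < p)
    (hab : a ≤ b) (hf0 : ∀ t ∈ Icc a b, 0 ≤ f t) (hf : IntervalIntegrable f volume a b)
    (hfp : IntervalIntegrable (fun t ↦ f t ^ p) volume a b) :
    ∫ t in a..b, f t ≤ (b - a) ^ (1 - p⁻¹) * (∫ t in a..b, f t ^ p) ^ p⁻¹ := by
  have : IsFiniteMeasure (volume.restrict (Ioc a b)) :=
    isFiniteMeasure_restrict.2 measure_Ioc_lt_top.ne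
  have hf0' : 0 ≤ᵐ[volume.restrict (Ioc a b)] f := by
    filter_upwards [ae_restrict_mem measurableSet_Ioc] with t ht
    exact hf0 t (Ioc_subset_Icc_self ht)
  have := integral_le_measureReal_rpow_mul_integral_rpow hp hf0' hf.aestronglyMeasurable
    ((intervalIntegrable_iff_integrableOn_Ioc_of_le hab).1 hfp)
  simpa [integral_of_le hab, hab] using this

section Primitive

variable {u u' : ℝ → ℝ} {a b : ℝ}

theorem absolutelyContinuousOnInterval_of_eq_add_integral
    (hu' : IntervalIntegrable u' volume a b) (hu : ∀ x ∈ uIcc a b, u x = u a + ∫ r in a..x, u' r) :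
    AbsolutelyContinuousOnInterval u a b :=
  (hu'.absolutelyContinuousOnInterval_intervalIntegral left_mem_uIcc).of_dist_le_mul
    (K := 1) fun x hx y hy ↦ by rw [hu x hx, hu y hy, dist_add_left, one_mul]

theorem ae_hasDerivAt_of_eq_add_integral
    (hu' : IntervalIntegrable u' volume a b) (hu : ∀ x ∈ uIcc a b, u x = u a + ∫ r in a..x, u' r) :
    ∀ᵐ x, x ∈ uIcc a b → HasDerivAt u (u' x) x := by
  filter_upwards [hu'.ae_hasDerivAt_integral, Measure.ae_ne volume a, Measure.ae_ne volume b]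
    with x hderiv hxa hxb hx
  have hnhds : uIcc a b ∈ 𝓝 x := by
    rw [uIcc] at hx ⊢
    exact Icc_mem_nhds (by grind) (by grind)
  refine ((hderiv hx a left_mem_uIcc).const_add (u a)).congr_of_eventuallyEq ?_
  filter_upwards [hnhds] with y hy using hu y hy

theorem integral_comp_mul_eq_integral_of_eq_add_integral {g : ℝ → ℝ} (hg : Continuous g)
    (hu' : IntervalIntegrable u' volume a b) (hu : ∀ x ∈ uIcc a b, u x = u a + ∫ r in a..x, u' r) :
    ∫ x in a..b, g (u x) * u' x = ∫ y in u a..u b, g y := by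
  set G : ℝ → ℝ := fun y ↦ ∫ r in (0 : ℝ)..y, g r
  have hG : ∀ y, HasDerivAt G (g y) y := fun y ↦ (hg.integral_hasStrictDerivAt 0 y).hasDerivAt
  have hGC1 : ContDiff ℝ 1 G := by
    rw [contDiff_one_iff_deriv]
    refine ⟨fun y ↦ (hG y).differentiableAt, ?_⟩
    rwa [show deriv G = g from funext fun y ↦ (hG y).deriv]
  have huAC := absolutelyContinuousOnInterval_of_eq_add_integral hu' hu
  obtain ⟨K, hK⟩ := hGC1.locallyLipschitz.locallyLipschitzOn.exists_lipschitzOnWith_of_compact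
    (isCompact_uIcc.image_of_continuousOn huAC.continuousOn)
  have hGuAC := hK.comp_absolutelyContinuousOnInterval huAC (mapsTo_image _ _)
  calc ∫ x in a..b, g (u x) * u' x = ∫ x in a..b, deriv (G ∘ u) x := by
        refine integral_congr_ae ?_
        filter_upwards [ae_hasDerivAt_of_eq_add_integral hu' hu] with x hx hxI
        exact (((hG (u x)).comp x (hx (uIoc_subset_uIcc hxI))).deriv).symm
    _ = G (u b) - G (u a) := hGuAC.integral_deriv_eq_sub
    _ = ∫ y in u a..u b, g y :=
        integral_interval_sub_left (hg.intervalIntegrable _ _) (hg.intervalIntegrable _ _)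

theorem intervalIntegrable_comp_mul_abs_of_eq_add_integral {g : ℝ → ℝ} (hg : Continuous g)
    (hu' : IntervalIntegrable u' volume a b) (hu : ∀ x ∈ uIcc a b, u x = u a + ∫ r in a..x, u' r) :
    IntervalIntegrable (fun r ↦ g (u r) * |u' r|) volume a b :=
  hu'.abs.continuousOn_mul
    (hg.comp_continuousOn (absolutelyContinuousOnInterval_of_eq_add_integral hu' hu).continuousOn)

theorem abs_integral_comp_le_integral_mul_abs {g : ℝ → ℝ} (hg : Continuous g) (hg0 : ∀ y, 0 ≤ g y)
    (hab : a ≤ b) (hu' : IntervalIntegrable u' volume a b)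
    (hu : ∀ s ∈ Icc a b, ∀ t ∈ Icc a b, u t = u s + ∫ r in s..t, u' r) {s t : ℝ}
    (hs : s ∈ Icc a b) (ht : t ∈ Icc a b) :
    |∫ y in u s..u t, g y| ≤ ∫ r in a..b, g (u r) * |u' r| := by
  rw [← uIcc_of_le hab] at hs ht hu
  have hst : uIcc s t ⊆ uIcc a b := uIcc_subset_uIcc hs ht
  have hint := intervalIntegrable_comp_mul_abs_of_eq_add_integral hg hu' (hu a left_mem_uIcc)
  rw [← integral_comp_mul_eq_integral_of_eq_add_integral hg (hu'.mono_set hst)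
    fun x hx ↦ hu s hs x (hst hx)]
  calc |∫ r in s..t, g (u r) * u' r| ≤ ∫ r in Ι s t, ‖g (u r) * u' r‖ := by
        rw [← Real.norm_eq_abs]; exact norm_integral_le_integral_norm_uIoc
    _ = ∫ r in Ι s t, g (u r) * |u' r| := by
        simp only [norm_mul, Real.norm_eq_abs, abs_of_nonneg (hg0 _)]
    _ ≤ ∫ r in Ι a b, g (u r) * |u' r| :=
        setIntegral_mono_set hint.def'
          (Eventually.of_forall fun r ↦ mul_nonneg (hg0 _) (abs_nonneg _))
          (uIoc_subset_uIoc_of_uIcc_subset_uIcc hst).eventuallyLE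
    _ = ∫ r in a..b, g (u r) * |u' r| := by rw [uIoc_of_le hab, integral_of_le hab]

theorem abs_integral_comp_le_rpow_mul_integral_rpow {g : ℝ → ℝ} {p : ℝ} (hp : 1 < p)
    (hg : Continuous g) (hg0 : ∀ y, 0 ≤ g y) (hab : a ≤ b) (hu' : IntervalIntegrable u' volume a b)
    (hu : ∀ s ∈ Icc a b, ∀ t ∈ Icc a b, u t = u s + ∫ r in s..t, u' r)
    (hup : IntervalIntegrable (fun r ↦ (g (u r) * |u' r|) ^ p) volume a b) {s t : ℝ}
    (hs : s ∈ Icc a b) (ht : t ∈ Icc a b) :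
    |∫ y in u s..u t, g y| ≤
      (b - a) ^ (1 - p⁻¹) * (∫ r in a..b, (g (u r) * |u' r|) ^ p) ^ p⁻¹ := by
  have hint := intervalIntegrable_comp_mul_abs_of_eq_add_integral hg hu'
    fun x hx ↦ hu a (left_mem_Icc.2 hab) x (by rwa [uIcc_of_le hab] at hx)
  exact (abs_integral_comp_le_integral_mul_abs hg hg0 hab hu' hu hs ht).trans
    (integral_le_rpow_mul_integral_rpow_of_nonneg hp hab
      (fun r _ ↦ mul_nonneg (hg0 _) (abs_nonneg _)) hint hup)

end Primitive

theorem rpow_mul_abs_rpow_le_mul_energy {x y ε : ℝ} (hy : 0 ≤ y) (hε : 0 < ε) :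
    y ^ ((1 : ℝ)/4) * |x| ^ ((3 : ℝ)/2) ≤
      2 * ε ^ ((1 : ℝ)/2) * ((1/2 : ℝ) * x ^ 2 + (ε ^ 2)⁻¹ * y) := by
  set b := ε ^ (-(1 : ℝ)/2) * y ^ ((1 : ℝ)/4)
  have hb : 0 ≤ b := by positivity
  have hyoung := Real.young_inequality_of_nonneg (a := |x| ^ ((3 : ℝ)/2)) (by positivity) hb
    (Real.holderConjugate_iff.2 ⟨by norm_num, by norm_num⟩ : (4/3 : ℝ).HolderConjugate 4)
  have hxp : (|x| ^ ((3 : ℝ)/2)) ^ (4/3 : ℝ) = x ^ 2 := by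
    rw [← Real.rpow_mul (abs_nonneg x)]; norm_num
  have hbq : b ^ (4 : ℝ) = (ε ^ 2)⁻¹ * y := by
    rw [Real.mul_rpow (by positivity) (by positivity), ← Real.rpow_mul hε.le,
      ← Real.rpow_mul hy]
    norm_num [Real.rpow_neg hε.le]
  have hεb : ε ^ ((1 : ℝ)/2) * b = y ^ ((1 : ℝ)/4) := by
    rw [← mul_assoc, ← Real.rpow_add hε]; norm_num
  calc y ^ ((1 : ℝ)/4) * |x| ^ ((3 : ℝ)/2) = ε ^ ((1 : ℝ)/2) * (|x| ^ ((3 : ℝ)/2) * b) := by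
        rw [← hεb]; ring
    _ ≤ ε ^ ((1 : ℝ)/2) * ((|x| ^ ((3 : ℝ)/2)) ^ (4/3 : ℝ) / (4/3) + b ^ (4 : ℝ) / 4) := by
        gcongr
    _ ≤ 2 * ε ^ ((1 : ℝ)/2) * ((1/2 : ℝ) * x ^ 2 + (ε ^ 2)⁻¹ * y) := by
        rw [hxp, hbq, mul_comm 2, mul_assoc]
        gcongr
        nlinarith [sq_nonneg x, mul_nonneg (inv_nonneg.2 (sq_nonneg ε)) hy]

section Energy

variable {v y : ℝ → ℝ} {h : ℝ}

theorem intervalIntegrable_rpow_mul_abs_rpow (hh : 0 ≤ h) (hy0 : ∀ t ∈ Icc 0 h, 0 ≤ y t)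
    (hv : AEStronglyMeasurable v (volume.restrict (Ioc 0 h)))
    (hv2 : IntervalIntegrable (fun t ↦ v t ^ 2) volume 0 h) (hy : IntervalIntegrable y volume 0 h) :
    IntervalIntegrable (fun t ↦ y t ^ ((1 : ℝ)/4) * |v t| ^ ((3 : ℝ)/2)) volume 0 h := by
  refine (((hv2.const_mul (1/2)).add (hy.const_mul (1 ^ 2)⁻¹)).const_mul
    (2 * 1 ^ ((1 : ℝ)/2))).mono_fun' ?_ ?_ <;> rw [uIoc_of_le hh]
  · exact ((hy.aestronglyMeasurable.aemeasurable.pow_const _).mul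
      (hv.aemeasurable.abs.pow_const _)).aestronglyMeasurable
  · filter_upwards [ae_restrict_mem measurableSet_Ioc] with t ht
    have hyt := hy0 t (Ioc_subset_Icc_self ht)
    rw [Real.norm_of_nonneg (by positivity)]
    exact rpow_mul_abs_rpow_le_mul_energy hyt one_pos

theorem integral_rpow_mul_abs_rpow_le_energy {ε : ℝ} (hε : 0 < ε) (hh : 0 ≤ h)
    (hy0 : ∀ t ∈ Icc 0 h, 0 ≤ y t)
    (hq : IntervalIntegrable (fun t ↦ y t ^ ((1 : ℝ)/4) * |v t| ^ ((3 : ℝ)/2)) volume 0 h)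
    (hv2 : IntervalIntegrable (fun t ↦ v t ^ 2) volume 0 h) (hy : IntervalIntegrable y volume 0 h) :
    ∫ t in 0..h, y t ^ ((1 : ℝ)/4) * |v t| ^ ((3 : ℝ)/2) ≤
      2 * ε ^ ((1 : ℝ)/2) * ∫ t in 0..h, ((1/2 : ℝ) * v t ^ 2 + (ε ^ 2)⁻¹ * y t) := by
  rw [← intervalIntegral.integral_const_mul]
  exact integral_mono_on hh hq (((hv2.const_mul _).add (hy.const_mul _)).const_mul _)
    fun t ht ↦ rpow_mul_abs_rpow_le_mul_energy (hy0 t ht) hε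

end Energy

theorem abs_integral_rpow_sub_integral_rpow_le {ψ d dd : ℝ → ℝ} {h : ℝ}
    (hψ : ContinuousOn ψ (Ici 0)) (hψ0 : ∀ s : ℝ, 0 ≤ s → 0 ≤ ψ s) (hh : 0 ≤ h)
    (hd0 : ∀ t ∈ Icc 0 h, 0 ≤ d t)
    (hd : ∀ s ∈ Icc 0 h, ∀ t ∈ Icc 0 h, d t = d s + ∫ r in s..t, dd r)
    (hdd : IntervalIntegrable dd volume 0 h)
    (hq : IntervalIntegrable (fun t ↦ ψ (d t) ^ ((1 : ℝ)/4) * |dd t| ^ ((3 : ℝ)/2)) volume 0 h)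
    {s t : ℝ} (hs : s ∈ Icc 0 h) (ht : t ∈ Icc 0 h) :
    |(∫ r in 0..d t, ψ r ^ ((1 : ℝ)/6)) - ∫ r in 0..d s, ψ r ^ ((1 : ℝ)/6)| ≤
      h ^ ((1 : ℝ)/3) *
        (∫ r in 0..h, ψ (d r) ^ ((1 : ℝ)/4) * |dd r| ^ ((3 : ℝ)/2)) ^ ((2 : ℝ)/3) := by
  -- `ψ` is arbitrary on `(-∞, 0)`, so the chain rule is applied to the extension `ψ (max r 0)`.
  set φ : ℝ → ℝ := fun r ↦ ψ (max r 0) ^ ((1 : ℝ)/6)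
  have hφ : Continuous φ := (hψ.comp_continuous (continuous_id.max continuous_const)
    fun r ↦ le_max_right r 0).rpow_const fun _ ↦ Or.inr (by norm_num)
  have hφ0 : ∀ r, 0 ≤ φ r := fun r ↦ Real.rpow_nonneg (hψ0 _ (le_max_right r 0)) _
  have hφψ : ∀ r, 0 ≤ r → φ r = ψ r ^ ((1 : ℝ)/6) := fun r hr ↦ by simp only [φ, max_eq_left hr]
  have hG : ∀ x ∈ Icc 0 h, ∫ r in 0..d x, ψ r ^ ((1 : ℝ)/6) = ∫ r in 0..d x, φ r :=
    fun x hx ↦ integral_congr fun r hr ↦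
      (hφψ r (by rw [uIcc_of_le (hd0 x hx)] at hr; exact hr.1)).symm
  have hmoment : EqOn (fun r ↦ ψ (d r) ^ ((1 : ℝ)/4) * |dd r| ^ ((3 : ℝ)/2))
      (fun r ↦ (φ (d r) * |dd r|) ^ (3/2 : ℝ)) (uIcc 0 h) := fun r hr ↦ by
    rw [uIcc_of_le hh] at hr
    have hψr := hψ0 _ (hd0 r hr)
    dsimp only
    rw [hφψ _ (hd0 r hr), Real.mul_rpow (Real.rpow_nonneg hψr _) (abs_nonneg _),
      ← Real.rpow_mul hψr]
    norm_num
  rw [hG t ht, hG s hs, integral_interval_sub_left (hφ.intervalIntegrable _ _)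
    (hφ.intervalIntegrable _ _), integral_congr hmoment]
  convert abs_integral_comp_le_rpow_mul_integral_rpow (p := 3/2) (by norm_num) hφ hφ0 hh hdd hd
    (hq.congr (hmoment.mono uIoc_subset_uIcc)) hs ht using 2 <;> norm_num

theorem rpow_one_third_mul_rpow_two_thirds_le {A X h : ℝ} (hA : 0 ≤ A) (hAX : A ≤ X)
    (hh : 0 ≤ h) :
    h ^ ((1 : ℝ)/3) * A ^ ((2 : ℝ)/3) ≤ (h ^ ((1 : ℝ)/2) * X) ^ ((2 : ℝ)/3) := by
  rw [Real.mul_rpow (Real.rpow_nonneg hh _) (hA.trans hAX), ← Real.rpow_mul hh,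
    show (1 : ℝ)/2 * (2/3) = 1/3 by norm_num]
  gcongr

theorem stmt15_general (ψ : ℝ → ℝ)
    (hψC1 : ContDiffOn ℝ 1 ψ (Ici 0))
    (hψ0 : ∀ s : ℝ, 0 ≤ s → 0 ≤ ψ s) :
    ∃ C : ℝ, 0 < C ∧
      ∀ (ε h K : ℝ) (d dd : ℝ → ℝ), 0 < ε → 0 < h →
        (∀ t ∈ Icc (0 : ℝ) h, 0 ≤ d t) →
        (∀ s ∈ Icc (0 : ℝ) h, ∀ t ∈ Icc (0 : ℝ) h, d t = d s + ∫ r in s..t, dd r) →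
        Measurable dd →
        IntervalIntegrable dd volume 0 h →
        IntervalIntegrable (fun t => (dd t) ^ 2) volume 0 h →
        IntervalIntegrable (fun t => ψ (d t)) volume 0 h →
        (∫ t in (0 : ℝ)..h, ((1/2 : ℝ) * (dd t) ^ 2 + (ε ^ 2)⁻¹ * ψ (d t))) ≤ K →
        ((∫ t in (0 : ℝ)..h, (ψ (d t)) ^ ((1 : ℝ)/4) * |dd t| ^ ((3 : ℝ)/2))
            ≤ C * ε ^ ((1 : ℝ)/2) * K) ∧
        (∀ s ∈ Icc (0 : ℝ) h, ∀ t ∈ Icc (0 : ℝ) h,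
          |(∫ r in (0 : ℝ)..(d t), (ψ r) ^ ((1 : ℝ)/6)) -
              (∫ r in (0 : ℝ)..(d s), (ψ r) ^ ((1 : ℝ)/6))|
            ≤ (C * h ^ ((1 : ℝ)/2) * ε ^ ((1 : ℝ)/2) * K) ^ ((2 : ℝ)/3)) := by
  refine ⟨2, two_pos, fun ε h K d dd hε hh hd0 hd _ hdd hdd2 hψd hK ↦ ?_⟩
  have hψd0 : ∀ t ∈ Icc 0 h, 0 ≤ ψ (d t) := fun t ht ↦ hψ0 _ (hd0 t ht)
  have hq := intervalIntegrable_rpow_mul_abs_rpow hh.le hψd0 hdd.aestronglyMeasurable hdd2 hψd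
  have hA := (integral_rpow_mul_abs_rpow_le_energy hε hh.le hψd0 hq hdd2 hψd).trans
    (mul_le_mul_of_nonneg_left hK (by positivity))
  have hA0 : 0 ≤ ∫ t in 0..h, ψ (d t) ^ ((1 : ℝ)/4) * |dd t| ^ ((3 : ℝ)/2) :=
    integral_nonneg hh.le fun t ht ↦ by have := hψd0 t ht; positivity
  refine ⟨hA, fun s hs t ht ↦ ?_⟩
  calc _ ≤ _ :=
        abs_integral_rpow_sub_integral_rpow_le hψC1.continuousOn hψ0 hh.le hd0 hd hdd hq hs ht
    _ ≤ (h ^ ((1 : ℝ)/2) * (2 * ε ^ ((1 : ℝ)/2) * K)) ^ ((2 : ℝ)/3) :=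
        rpow_one_third_mul_rpow_two_thirds_le hA0 hA hh.le
    _ = (2 * h ^ ((1 : ℝ)/2) * ε ^ ((1 : ℝ)/2) * K) ^ ((2 : ℝ)/3) := by ring_nf

/-- Young-inequality estimate for `G ∘ d` and the resulting
oscillation bound.  Here `ψ(s) = β s²` near `0`, `0 < ψ ≤ Cψ` away from `0`,
`G(t) = ∫₀^t ψ^{1/6}`, and `d` is an `H¹` (absolutely continuous) function on
an interval `[0,h]` with derivative `dd` and energy
`∫₀^h (½|d'|² + ε⁻²ψ(d)) ≤ K`.  Then
`∫₀^h ψ(d)^{1/4} |d'|^{3/2} ≤ C ε^{1/2} K` and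
`osc G(d) ≤ (C h^{1/2} ε^{1/2} K)^{2/3}`, with `C` depending only on `ψ`. -/
theorem stmt15 (ψ : ℝ → ℝ) (β δ₀ Cψ : ℝ) (hβ : 0 < β) (hδ₀ : 0 < δ₀) (hCψ : 0 < Cψ)
    (hψC1 : ContDiffOn ℝ 1 ψ (Ici 0))
    (hψ1 : ∀ s ∈ Ico (0 : ℝ) δ₀, ψ s = β * s ^ 2)
    (hψ2 : ∀ s : ℝ, δ₀ ≤ s → 0 < ψ s ∧ ψ s ≤ Cψ)
    (hψ0 : ∀ s : ℝ, 0 ≤ s → 0 ≤ ψ s) :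
    ∃ C : ℝ, 0 < C ∧
      ∀ (ε h K : ℝ) (d dd : ℝ → ℝ), 0 < ε → 0 < h →
        (∀ t ∈ Icc (0 : ℝ) h, 0 ≤ d t) →
        (∀ s ∈ Icc (0 : ℝ) h, ∀ t ∈ Icc (0 : ℝ) h, d t = d s + ∫ r in s..t, dd r) →
        Measurable dd →
        IntervalIntegrable dd volume 0 h →
        IntervalIntegrable (fun t => (dd t) ^ 2) volume 0 h →
        IntervalIntegrable (fun t => ψ (d t)) volume 0 h →
        (∫ t in (0 : ℝ)..h, ((1/2 : ℝ) * (dd t) ^ 2 + (ε ^ 2)⁻¹ * ψ (d t))) ≤ K →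
        ((∫ t in (0 : ℝ)..h, (ψ (d t)) ^ ((1 : ℝ)/4) * |dd t| ^ ((3 : ℝ)/2))
            ≤ C * ε ^ ((1 : ℝ)/2) * K) ∧
        (∀ s ∈ Icc (0 : ℝ) h, ∀ t ∈ Icc (0 : ℝ) h,
          |(∫ r in (0 : ℝ)..(d t), (ψ r) ^ ((1 : ℝ)/6)) -
              (∫ r in (0 : ℝ)..(d s), (ψ r) ^ ((1 : ℝ)/6))|
            ≤ (C * h ^ ((1 : ℝ)/2) * ε ^ ((1 : ℝ)/2) * K) ^ ((2 : ℝ)/3)) :=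
  stmt15_general ψ hψC1 hψ0
end
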